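/- For d > 0, w, ℓ ≥ 0 and λ > 0, the upper bound P^(ub)(κ) = exp(−λ A_{κ,d}(w,ℓ)) is nondecreasing in κ, and satisfies P^(ub)(κ) = exp(−2λwℓ) for all κ ≥ ℓ when w < d. -/
import Mathlib


noncomputable def A (κ d w ℓ : ℝ) : ℝ :=
  if d ≤ w then (w + d) * ℓ
  else if ℓ < κ then 2 * w * ℓ
  else (ℓ - κ) * (d - w) + 2 * w * ℓ

theorem pub_monotone (d w ℓ lam : ℝ) (hd : 0 < d) (hw : 0 ≤ w) (hℓ : 0 ≤ ℓ)
    (hlam : 0 < lam) :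
    MonotoneOn (fun κ => Real.exp (-lam * A κ d w ℓ)) (Set.Ici (0 : ℝ)) ∧
      (w < d → ∀ κ, ℓ ≤ κ →
        Real.exp (-lam * A κ d w ℓ) = Real.exp (-(2 * lam * w * ℓ))) := by
  constructor
  · intro a _ b _ hab
    simp only
    apply Real.exp_le_exp.2
    have hA : A b d w ℓ ≤ A a d w ℓ := by
      unfold A
      split_ifs with h1 h2 h3 h4 h5 <;> nlinarith
    nlinarith
  · intro hwd κ hκ
    have : A κ d w ℓ = 2 * w * ℓ := by
      unfold A
      split_ifs with h1 h2 <;> nlinarith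
    rw [this]; ring_nf
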